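/- arXiv:2601.06501 — 3 statements merged into one kernel-verified Lean document; each statement's English description precedes it below -/
import Mathlib

section
/- (Proposition 1(iv).) Let d > 0 and let μ be the uniform probability measure on the interval [−d/2, d/2). Then for every real x, the integral ∫ (M_d[x + v])² dμ(v) equals d²/12. -/
open MeasureTheory

/-- The modulo-`d` function: `M_d[x] = x - d * ⌊x/d + 1/2⌋`. -/
noncomputable def moduloD (d x : ℝ) : ℝ := x - d * ⌊x / d + 1 / 2⌋

/-- The uniform probability measure on `[-d/2, d/2)`:
`(1/d) • (volume restricted to Ico (-d/2) (d/2))`. -/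
noncomputable def uniformIco (d : ℝ) : Measure ℝ :=
  (ENNReal.ofReal (1 / d)) • (volume.restrict (Set.Ico (-(d / 2)) (d / 2)))

lemma moduloD_periodic (d : ℝ) (hd : 0 < d) :
    Function.Periodic (moduloD d) d := by
  intro y
  unfold moduloD
  have : (y + d) / d + 1 / 2 = (y / d + 1 / 2) + 1 := by field_simp; ring
  rw [this, Int.floor_add_one]
  push_cast
  ring

lemma moduloD_eq_self (d : ℝ) (hd : 0 < d) (y : ℝ) (h1 : -(d/2) ≤ y) (h2 : y < d/2) :
    moduloD d y = y := by
  unfold moduloD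
  have h0 : ⌊y / d + 1 / 2⌋ = 0 := by
    rw [Int.floor_eq_zero_iff]
    constructor
    · have : -(1/2 : ℝ) ≤ y / d := by rw [le_div_iff₀ hd]; linarith
      linarith
    · have : y / d < 1/2 := by rw [div_lt_iff₀ hd]; linarith
      linarith
  rw [h0]
  simp

/-- Proposition 1(iv): for `d > 0` and any real `x`,
`∫ (M_d[x + v])² dμ(v) = d²/12`, where `μ` is uniform on `[-d/2, d/2)`. -/
theorem integral_sq_moduloD (d : ℝ) (hd : 0 < d) (x : ℝ) :
    ∫ v, (moduloD d (x + v)) ^ 2 ∂(uniformIco d) = d ^ 2 / 12 := by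
  have hper : Function.Periodic (fun y => (moduloD d y) ^ 2) d :=
    fun y => by simp only []; rw [moduloD_periodic d hd y]
  have key : (∫ v in Set.Ico (-(d/2)) (d/2), (moduloD d (x + v)) ^ 2) = d ^ 3 / 12 := by
    rw [MeasureTheory.integral_Ico_eq_integral_Ioo,
      ← MeasureTheory.integral_Ioc_eq_integral_Ioo,
      ← intervalIntegral.integral_of_le (by linarith : -(d/2) ≤ d/2)]
    rw [show (∫ v in (-(d/2))..(d/2), (moduloD d (x + v)) ^ 2)
        = ∫ v in (x + -(d/2))..(x + d/2), (moduloD d v) ^ 2 from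
      intervalIntegral.integral_comp_add_left (fun y => (moduloD d y) ^ 2) x]
    have h2 : x + d/2 = (x + -(d/2)) + d := by ring
    have h3 : (d/2 : ℝ) = -(d/2) + d := by ring
    rw [h2, hper.intervalIntegral_add_eq (x + -(d/2)) (-(d/2)), ← h3]
    have hne : ∀ᵐ v : ℝ ∂volume, v ≠ d/2 := by
      rw [ae_iff]
      simpa using measure_singleton (d/2)
    have hcong : (∫ v in (-(d/2))..(d/2), (moduloD d v) ^ 2)
        = ∫ v in (-(d/2))..(d/2), v ^ 2 := by
      apply intervalIntegral.integral_congr_ae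
      filter_upwards [hne] with v hv hvin
      rw [Set.uIoc_of_le (by linarith : -(d/2) ≤ d/2), Set.mem_Ioc] at hvin
      rw [moduloD_eq_self d hd v hvin.1.le (lt_of_le_of_ne hvin.2 hv)]
    rw [hcong, integral_pow]
    norm_num
    ring
  unfold uniformIco
  rw [integral_smul_measure, key]
  rw [ENNReal.toReal_ofReal (by positivity)]
  have : d ≠ 0 := ne_of_gt hd
  field_simp
  ring
  rw [show d ^ 3 = d ^ 2 * d by ring, mul_assoc, mul_inv_cancel₀ this, mul_one]
end

section
/- (Inequality (32): the surrogate variance dominates the true variance.) Let P, σ, A, B > 0 and let H, h be reals with 0 < H and H² ≤ h². Define sequences a, b : ℕ → ℝ by a₁ = σ²/(12·P·H²), b₁ = σ²/(12·P·h²), and for l ≥ 1, a_{l+1} = ( 1/a_l + H²·(P/B)·(A/a_l)/σ² )^{−1} and b_{l+1} = ( 1/b_l + h²·(P/B)·(A/a_l)/σ² )^{−1}. Then for every j ≥ 1, 0 < b_j ≤ a_j. -/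
/-! Both recursions add a nonnegative precision increment to the reciprocal of the previous
variance, and the increment of the true system (`h²` times the common factor) is at least the
surrogate one (`H²` times it). Since `x ↦ (1/x + c)⁻¹` is increasing in `x` and decreasing in `c`,
the ordering `b ≤ a` of the initial variances propagates along the recursion. -/

theorem inv_one_div_add_le_inv_one_div_add {x y c d : ℝ} (hy : 0 < y) (hyx : y ≤ x)
    (hc : 0 ≤ c) (hcd : c ≤ d) : (1 / y + d)⁻¹ ≤ (1 / x + c)⁻¹ := by
  have hx : 0 < x := hy.trans_le hyx
  exact inv_anti₀ (by positivity) (by gcongr)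

theorem pos_and_le_of_inv_one_div_add_recurrence {a b c d : ℕ → ℝ}
    (hb₁ : 0 < b 1) (hba₁ : b 1 ≤ a 1)
    (hcd : ∀ l, 1 ≤ l → 0 < a l → 0 ≤ c l ∧ c l ≤ d l)
    (ha : ∀ l, 1 ≤ l → a (l + 1) = (1 / a l + c l)⁻¹)
    (hb : ∀ l, 1 ≤ l → b (l + 1) = (1 / b l + d l)⁻¹) :
    ∀ j, 1 ≤ j → 0 < b j ∧ b j ≤ a j := by
  intro j hj
  induction j, hj using Nat.le_induction with
  | base => exact ⟨hb₁, hba₁⟩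
  | succ l hl ih =>
    obtain ⟨hbl, hbal⟩ := ih
    obtain ⟨hcl, hcdl⟩ := hcd l hl (hbl.trans_le hbal)
    rw [ha l hl, hb l hl]
    exact ⟨inv_pos.2 (add_pos_of_pos_of_nonneg (one_div_pos.2 hbl) (hcl.trans hcdl)),
      inv_one_div_add_le_inv_one_div_add hbl hbal hcl hcdl⟩

/-- Inequality (32): the surrogate variance dominates the true variance.
Let `P, σ, A, B > 0` and `0 < H`, `H² ≤ h²`.  With `a 1 = σ²/(12·P·H²)`,
`b 1 = σ²/(12·P·h²)`, and, for `l ≥ 1`,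
`a (l+1) = (1/a l + H²·(P/B)·(A/a l)/σ²)⁻¹` and
`b (l+1) = (1/b l + h²·(P/B)·(A/a l)/σ²)⁻¹`,
we have `0 < b j ≤ a j` for every `j ≥ 1`. -/
theorem surrogate_variance_dominates (P σ A B H h : ℝ)
    (hP : 0 < P) (hσ : 0 < σ) (hA : 0 < A) (hB : 0 < B)
    (hH : 0 < H) (hHh : H ^ 2 ≤ h ^ 2)
    (a b : ℕ → ℝ)
    (ha1 : a 1 = σ ^ 2 / (12 * P * H ^ 2))
    (hb1 : b 1 = σ ^ 2 / (12 * P * h ^ 2))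
    (harec : ∀ l : ℕ, 1 ≤ l →
      a (l + 1) = (1 / a l + H ^ 2 * (P / B) * (A / a l) / σ ^ 2)⁻¹)
    (hbrec : ∀ l : ℕ, 1 ≤ l →
      b (l + 1) = (1 / b l + h ^ 2 * (P / B) * (A / a l) / σ ^ 2)⁻¹) :
    ∀ j : ℕ, 1 ≤ j → 0 < b j ∧ b j ≤ a j := by
  have hh : 0 < h ^ 2 := (pow_pos hH 2).trans_le hHh
  have hba₁ : b 1 ≤ a 1 := by
    rw [ha1, hb1]
    gcongr
  exact pos_and_le_of_inv_one_div_add_recurrence (by rw [hb1]; positivity) hba₁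
    (fun l _ hal => ⟨by positivity, by gcongr⟩) harec hbrec
end

section
/- (Lemma 2: existence of the steady-state ratio ρ*.) Let c > 0 and H₁, H₂ ≥ 0 with H₁ + H₂ > 0. Define ρ₃ = 1/(1 + H₁²·c) and ρ₄ = 1/(1 + (H₁ + H₂·√ρ₃)²·c). Then there exists ρ* with ρ₄ ≤ ρ* < 1 satisfying ρ* · (1 + (H₁ + H₂·√ρ*)²·c) = 1, i.e. ρ* = 1/(1 + (H₁ + H₂·√ρ*)²·c). -/
/-!
The ratios are the iterates `ρ₃ = f 0`, `ρ₄ = f (f 0)` of the map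
`f ρ = 1 / (1 + (H₁ + H₂ √ρ)² c)`, which is continuous, antitone, and sends `[0, 1]` into
itself with `f 1 < 1`. Its fixed point `ρ*` in `[0, 1]` (intermediate value theorem) therefore
satisfies `ρ* ≠ 1`, and antitonicity gives `ρ* = f ρ* ≤ f 0`, hence `f (f 0) ≤ f ρ* = ρ*`.
-/

open Real Function

theorem Antitone.iterate_two_le_of_isFixedPt {α : Type*} [Preorder α] {f : α → α}
    (hf : Antitone f) {a x : α} (hx : IsFixedPt f x) (hax : a ≤ x) : f (f a) ≤ x :=
  calc f (f a) ≤ f x := hf (hx ▸ hf hax)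
    _ = x := hx

noncomputable def ratioMap (c H₁ H₂ ρ : ℝ) : ℝ :=
  1 / (1 + (H₁ + H₂ * √ρ) ^ 2 * c)

section ratioMap

variable {c H₁ H₂ : ℝ}

lemma ratioMap_zero : ratioMap c H₁ H₂ 0 = 1 / (1 + H₁ ^ 2 * c) := by
  simp [ratioMap]

lemma one_add_sq_mul_pos (hc : 0 ≤ c) (x : ℝ) : 0 < 1 + x ^ 2 * c := by
  positivity

lemma ratioMap_pos (hc : 0 ≤ c) (ρ : ℝ) : 0 < ratioMap c H₁ H₂ ρ :=
  one_div_pos.mpr (one_add_sq_mul_pos hc _)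

lemma ratioMap_one_lt_one (hc : 0 < c) (hsum : H₁ + H₂ ≠ 0) : ratioMap c H₁ H₂ 1 < 1 := by
  have : 0 < (H₁ + H₂) ^ 2 * c := by positivity
  rw [ratioMap, sqrt_one, mul_one, div_lt_one (by positivity)]
  linarith

lemma continuous_ratioMap (hc : 0 ≤ c) : Continuous (ratioMap c H₁ H₂) :=
  continuous_const.div (by fun_prop) fun ρ ↦ (one_add_sq_mul_pos hc _).ne'

lemma ratioMap_antitone (hc : 0 ≤ c) (hH₁ : 0 ≤ H₁) (hH₂ : 0 ≤ H₂) :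
    Antitone (ratioMap c H₁ H₂) := by
  intro ρ σ hρσ
  unfold ratioMap
  gcongr

lemma mul_one_add_eq_one_of_isFixedPt (hc : 0 ≤ c) {ρ : ℝ}
    (hρ : IsFixedPt (ratioMap c H₁ H₂) ρ) : ρ * (1 + (H₁ + H₂ * √ρ) ^ 2 * c) = 1 := by
  nth_rewrite 1 [← hρ.eq]
  exact one_div_mul_cancel (one_add_sq_mul_pos hc _).ne'

end ratioMap

/-- Lemma 2: existence of the steady-state ratio `ρ*`.  For `c > 0` and
`H₁, H₂ ≥ 0` with `H₁ + H₂ > 0`, setting `ρ₃ = 1/(1 + H₁²·c)` and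
`ρ₄ = 1/(1 + (H₁ + H₂·√ρ₃)²·c)`, there exists `ρ*` with `ρ₄ ≤ ρ* < 1` such that
`ρ* · (1 + (H₁ + H₂·√ρ*)²·c) = 1`. -/
theorem exists_steady_state_ratio (c H₁ H₂ : ℝ) (hc : 0 < c)
    (hH₁ : 0 ≤ H₁) (hH₂ : 0 ≤ H₂) (hsum : 0 < H₁ + H₂)
    (ρ₃ ρ₄ : ℝ) (hρ₃ : ρ₃ = 1 / (1 + H₁ ^ 2 * c))
    (hρ₄ : ρ₄ = 1 / (1 + (H₁ + H₂ * Real.sqrt ρ₃) ^ 2 * c)) :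
    ∃ ρ : ℝ, ρ₄ ≤ ρ ∧ ρ < 1 ∧
      ρ * (1 + (H₁ + H₂ * Real.sqrt ρ) ^ 2 * c) = 1 := by
  set f := ratioMap c H₁ H₂
  have hf_one : f 1 < 1 := ratioMap_one_lt_one hc hsum.ne'
  obtain ⟨ρ, ⟨hρ₀, hρ₁⟩, hfix⟩ := exists_mem_Icc_isFixedPt
    (continuous_ratioMap hc.le).continuousOn zero_le_one (ratioMap_pos hc.le 0).le hf_one.le
  have hρ₃_iter : ρ₃ = f 0 := hρ₃.trans ratioMap_zero.symm
  have hρ₄_iter : ρ₄ = f (f 0) := by rw [hρ₄, hρ₃_iter]; rfl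
  refine ⟨ρ, ?_, ?_, mul_one_add_eq_one_of_isFixedPt hc.le hfix⟩
  · exact hρ₄_iter ▸ (ratioMap_antitone hc.le hH₁ hH₂).iterate_two_le_of_isFixedPt hfix hρ₀
  · exact hρ₁.lt_of_ne fun h ↦ hf_one.ne (h ▸ hfix.eq)
end
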